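/- Let G be a graph with l distinct vertex degrees whose degree sequence is forcibly self-complementary, and let i be an index in {1, ..., l} with i != (l+1)/2. If G' is a graph obtained from G by a single 2-switch, then G' has the same number of edges inside V_i union V_{l+1-i} as G, and the same number of edges between V_i and V_{l+1-i} as G. -/

import Mathlib

/-!
A 2-switch preserves every vertex degree, so `G'` realizes the same degree sequence as `G` and
is self-complementary too. An isomorphism `φ : H ≃g Hᶜ` sends a vertex of degree `k` to one of
degree `n - 1 - k`. Hence the degree values are symmetric, `d (rev i) = n - 1 - d i`, and `φ`
exchanges the classes `V_i` and `V_{l+1-i}`. So `φ` maps the edges of `H` inside the slice, and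
those between the two classes, bijectively onto the non-edges there: `H` has exactly half of the
available pairs as edges, a number depending only on the degree classes, which `G` and `G'` share.
-/

open SimpleGraph

/-- The degree of a vertex, as the cardinality of its neighbor set. -/
noncomputable def deg {V : Type*} (G : SimpleGraph V) (v : V) : ℕ := (G.neighborSet v).ncard

/-- The degree sequence of a finite graph, as a multiset (which determines the
non-increasing sequence of vertex degrees). -/
noncomputable def degMultiset {V : Type*} [Finite V] (G : SimpleGraph V) : Multiset ℕ :=
  letI := Fintype.ofFinite V
  Finset.univ.val.map fun v => deg G v

/-- A graph is self-complementary if it is isomorphic to its complement. -/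
def IsSelfCompl {V : Type*} (G : SimpleGraph V) : Prop := Nonempty (G ≃g Gᶜ)

/-- A degree sequence is forcibly self-complementary if every realization of it
is self-complementary. -/
def ForciblySC (τ : Multiset ℕ) : Prop :=
  ∀ G : SimpleGraph (Fin (Multiset.card τ)), degMultiset G = τ → IsSelfCompl G

/-- `G'` is obtained from `G` by a single 2-switch
`(v1 v2, v3 v4) → (v1 v3, v2 v4)`. -/
def TwoSwitch {V : Type*} (G G' : SimpleGraph V) : Prop :=
  ∃ v1 v2 v3 v4 : V, v1 ≠ v3 ∧ v2 ≠ v4 ∧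
    G.Adj v1 v2 ∧ G.Adj v3 v4 ∧ ¬ G.Adj v1 v3 ∧ ¬ G.Adj v2 v4 ∧
    G' = SimpleGraph.fromEdgeSet
      ((G.edgeSet \ {s(v1, v2), s(v3, v4)}) ∪ {s(v1, v3), s(v2, v4)})

section Degrees

variable {V W : Type*} {G : SimpleGraph V} {H : SimpleGraph W}

lemma deg_add_deg_compl [Finite V] (G : SimpleGraph V) (v : V) :
    deg G v + deg Gᶜ v = Nat.card V - 1 := by
  rw [deg, deg, ← Set.ncard_union_eq (G.compl_neighborSet_disjoint v),
    neighborSet_union_compl_neighborSet_eq, Set.ncard_compl, Set.ncard_singleton]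

lemma deg_le [Finite V] (G : SimpleGraph V) (v : V) : deg G v ≤ Nat.card V - 1 :=
  (deg_add_deg_compl G v).symm ▸ Nat.le_add_right _ _

lemma degMultiset_congr [Finite V] {G G' : SimpleGraph V} (h : ∀ v, deg G v = deg G' v) :
    degMultiset G = degMultiset G' :=
  Multiset.map_congr rfl fun v _ => h v

namespace SimpleGraph.Iso

lemma deg_apply (φ : G ≃g H) (v : V) : deg H (φ v) = deg G v := by
  rw [deg, deg, ← φ.image_neighborSet, Set.ncard_image_of_injective _ φ.injective]

lemma deg_apply_of_compl [Finite V] (φ : G ≃g Gᶜ) (v : V) :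
    deg G (φ v) = Nat.card V - 1 - deg G v := by
  have := deg_apply φ v
  have := deg_add_deg_compl G (φ v)
  omega

lemma degMultiset_eq [Finite V] [Finite W] (φ : G ≃g H) : degMultiset G = degMultiset H := by
  let := Fintype.ofFinite V
  let := Fintype.ofFinite W
  rw [degMultiset, degMultiset, ← Multiset.map_univ_val_equiv φ.toEquiv, Multiset.map_map]
  exact Multiset.map_congr rfl fun v _ => (deg_apply φ v).symm

def compl (φ : G ≃g H) : Gᶜ ≃g Hᶜ :=
  ⟨φ.toEquiv, (Embedding.complEquiv φ.toEmbedding).map_rel_iff⟩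

lemma isSelfCompl_iff (φ : G ≃g H) : IsSelfCompl G ↔ IsSelfCompl H :=
  ⟨fun ⟨ψ⟩ => ⟨(φ.symm.trans ψ).trans (compl φ)⟩,
    fun ⟨ψ⟩ => ⟨(φ.trans ψ).trans (compl φ).symm⟩⟩

end SimpleGraph.Iso

lemma ForciblySC.isSelfCompl [Finite V] (h : ForciblySC (degMultiset G)) : IsSelfCompl G := by
  let := Fintype.ofFinite V
  have hcard : Nat.card V = Multiset.card (degMultiset G) := by
    simp [degMultiset, Nat.card_eq_fintype_card]
  let φ := Iso.map (Finite.equivFinOfCardEq hcard) G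
  exact (Iso.isSelfCompl_iff φ).mpr (h _ (Iso.degMultiset_eq φ).symm)

end Degrees

section TwoSwitch

variable {V : Type*} {G G' : SimpleGraph V} {v1 v2 v3 v4 : V}

def TwoSwitchAt (G G' : SimpleGraph V) (v1 v2 v3 v4 : V) : Prop :=
  v1 ≠ v3 ∧ v2 ≠ v4 ∧ G.Adj v1 v2 ∧ G.Adj v3 v4 ∧ ¬ G.Adj v1 v3 ∧ ¬ G.Adj v2 v4 ∧
    G' = SimpleGraph.fromEdgeSet
      ((G.edgeSet \ {s(v1, v2), s(v3, v4)}) ∪ {s(v1, v3), s(v2, v4)})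

namespace TwoSwitchAt

lemma swap_ends (h : TwoSwitchAt G G' v1 v2 v3 v4) : TwoSwitchAt G G' v2 v1 v4 v3 := by
  obtain ⟨h13, h24, a12, a34, n13, n24, rfl⟩ := h
  refine ⟨h24, h13, a12.symm, a34.symm, n24, n13, ?_⟩
  rw [Sym2.eq_swap (a := v2) (b := v1), Sym2.eq_swap (a := v4) (b := v3),
    Set.pair_comm s(v2, v4)]

lemma swap_edges (h : TwoSwitchAt G G' v1 v2 v3 v4) : TwoSwitchAt G G' v3 v4 v1 v2 := by
  obtain ⟨h13, h24, a12, a34, n13, n24, rfl⟩ := h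
  refine ⟨h13.symm, h24.symm, a34, a12, fun h => n13 h.symm, fun h => n24 h.symm, ?_⟩
  rw [Set.pair_comm s(v3, v4), Sym2.eq_swap (a := v3) (b := v1),
    Sym2.eq_swap (a := v4) (b := v2)]

lemma neighborSet_left (h : TwoSwitchAt G G' v1 v2 v3 v4) :
    G'.neighborSet v1 = insert v3 (G.neighborSet v1 \ {v2}) := by
  obtain ⟨h13, -, a12, -, -, n24, rfl⟩ := h
  have h14 : v1 ≠ v4 := by rintro rfl; exact n24 a12.symm
  ext w
  simp only [mem_neighborSet, fromEdgeSet_adj, Set.mem_union, Set.mem_sdiff,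
    Set.mem_insert_iff, Set.mem_singleton_iff, Sym2.eq_iff, mem_edgeSet]
  grind [G.ne_of_adj]

lemma deg_left [Finite V] (h : TwoSwitchAt G G' v1 v2 v3 v4) : deg G' v1 = deg G v1 := by
  rw [deg, h.neighborSet_left]
  obtain ⟨-, -, a12, -, n13, -, -⟩ := h
  have hv3 : v3 ∉ G.neighborSet v1 \ {v2} := fun hv => n13 hv.1
  have hv2 : v2 ∈ G.neighborSet v1 := a12
  rw [Set.ncard_insert_of_notMem hv3, Set.ncard_sdiff_singleton_add_one hv2, deg]

lemma neighborSet_of_ne (h : TwoSwitchAt G G' v1 v2 v3 v4) {v : V}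
    (hv1 : v ≠ v1) (hv2 : v ≠ v2) (hv3 : v ≠ v3) (hv4 : v ≠ v4) :
    G'.neighborSet v = G.neighborSet v := by
  obtain ⟨-, -, -, -, -, -, rfl⟩ := h
  ext w
  simp only [mem_neighborSet, fromEdgeSet_adj, Set.mem_union, Set.mem_sdiff,
    Set.mem_insert_iff, Set.mem_singleton_iff, Sym2.eq_iff, mem_edgeSet]
  grind [G.ne_of_adj]

lemma deg_eq [Finite V] (h : TwoSwitchAt G G' v1 v2 v3 v4) (v : V) : deg G' v = deg G v := by
  by_cases hv1 : v = v1
  · exact hv1 ▸ h.deg_left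
  by_cases hv2 : v = v2
  · exact hv2 ▸ h.swap_ends.deg_left
  by_cases hv3 : v = v3
  · exact hv3 ▸ h.swap_edges.deg_left
  by_cases hv4 : v = v4
  · exact hv4 ▸ h.swap_edges.swap_ends.deg_left
  rw [deg, h.neighborSet_of_ne hv1 hv2 hv3 hv4, deg]

end TwoSwitchAt

lemma TwoSwitch.deg_eq [Finite V] (h : TwoSwitch G G') (v : V) : deg G' v = deg G v :=
  let ⟨_, _, _, _, h⟩ := h
  TwoSwitchAt.deg_eq h v

end TwoSwitch

lemma StrictAnti.apply_rev_eq_sub {l N : ℕ} {d : Fin l → ℕ} (hd : StrictAnti d)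
    (hle : ∀ j, d j ≤ N) (hsymm : ∀ j, ∃ k, d k = N - d j) (j : Fin l) :
    d j.rev = N - d j := by
  -- `f` pairs each value with its complement; it reverses the order, so `f ∘ rev = id`.
  choose f hf using hsymm
  have hf_anti : StrictAnti f := fun a b hab => hd.lt_iff_gt.mp <| by
    have := hd hab
    have := hle a
    have := hle b
    rw [hf, hf]
    omega
  have hfj : f j = j.rev := by
    simpa using (hf_anti.comp Fin.rev_strictAnti).apply_eq (x := j.rev)
  rw [← hfj, hf]

section Counting

variable {V : Type*} {H : SimpleGraph V}

lemma Sym2.map_surjective {W : Type*} {f : V → W} (hf : Function.Surjective f) :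
    Function.Surjective (Sym2.map f) := by
  intro e
  induction e using Sym2.ind with
  | h x y =>
    obtain ⟨x', rfl⟩ := hf x
    obtain ⟨y', rfl⟩ := hf y
    exact ⟨s(x', y'), rfl⟩

lemma Sym2.preimage_map_pairs (f : V → V) {A B : Set V} (hA : f ⁻¹' A = B)
    (hB : f ⁻¹' B = A) :
    Sym2.map f ⁻¹' {e | ∃ a ∈ A, ∃ b ∈ B, e = s(a, b)} =
      {e | ∃ a ∈ A, ∃ b ∈ B, e = s(a, b)} := by
  simp only [Set.ext_iff, Set.mem_preimage] at hA hB
  ext e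
  induction e using Sym2.ind with
  | h x y =>
    simp only [Set.mem_preimage, Sym2.map_mk, Set.mem_ofPred_eq, Sym2.eq_iff]
    grind

lemma SimpleGraph.induce_compl (G : SimpleGraph V) (s : Set V) :
    Gᶜ.induce s = (G.induce s)ᶜ := by
  ext u v
  simp [Subtype.ext_iff]

namespace SimpleGraph.Iso

lemma two_mul_ncard_edgeSet_inter_of_compl [Finite V] (φ : H ≃g Hᶜ) {P : Set (Sym2 V)}
    (hP : Sym2.map φ ⁻¹' P = P) :
    2 * (H.edgeSet ∩ P).ncard = {e ∈ P | ¬ e.IsDiag}.ncard := by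
  have hcard : (H.edgeSet ∩ P).ncard = (Hᶜ.edgeSet ∩ P).ncard := by
    rw [← Set.ncard_preimage_of_injective_subset_range (s := Hᶜ.edgeSet ∩ P)
      (Sym2.map.injective φ.injective) fun e _ => Sym2.map_surjective φ.surjective e,
      Set.preimage_inter, hP]
    congr 2
    exact Set.ext fun e => (map_mem_edgeSet_iff φ).symm
  have hdisj : Disjoint (H.edgeSet ∩ P) (Hᶜ.edgeSet ∩ P) :=
    (disjoint_edgeSet.mpr disjoint_compl_right).mono Set.inter_subset_left Set.inter_subset_left
  have hunion : (H.edgeSet ∩ P) ∪ (Hᶜ.edgeSet ∩ P) = {e ∈ P | ¬ e.IsDiag} := by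
    ext e
    induction e using Sym2.ind with
    | h x y =>
      simp only [Set.mem_union, Set.mem_inter_iff, mem_edgeSet, compl_adj, Set.mem_sep_iff,
        Sym2.mk_isDiag_iff]
      grind [H.ne_of_adj]
  rw [two_mul, ← hunion, Set.ncard_union_eq hdisj, ← hcard]

variable [Finite V]

lemma two_mul_ncard_edgeSet_induce_of_compl (φ : H ≃g Hᶜ) {S : Set V} (hS : φ ⁻¹' S = S) :
    2 * (H.induce S).edgeSet.ncard = {e : Sym2 S | ¬ e.IsDiag}.ncard := by
  have hbij : Set.BijOn φ S S := by
    have := φ.injective.injOn.bijOn_image (s := φ ⁻¹' S)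
    rwa [Set.image_preimage_eq S φ.surjective, hS] at this
  have ψ : H.induce S ≃g (H.induce S)ᶜ := induce_compl H S ▸ φ.induce hbij
  simpa using two_mul_ncard_edgeSet_inter_of_compl ψ (P := Set.univ) Set.preimage_univ

lemma preimage_setOf_deg_eq_of_compl (φ : H ≃g Hᶜ) {a b : ℕ} (hab : a + b = Nat.card V - 1) :
    φ ⁻¹' {v | deg H v = a} = {v | deg H v = b} := by
  ext v
  have := deg_apply_of_compl φ v
  have := deg_le H v
  simp only [Set.mem_preimage, Set.mem_ofPred_eq]
  omega

lemma two_mul_ncard_edgeSet_induce_degClasses (φ : H ≃g Hᶜ) {a b : ℕ}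
    (hab : a + b = Nat.card V - 1) :
    2 * (H.induce ({v | deg H v = a} ∪ {v | deg H v = b})).edgeSet.ncard =
      {e : Sym2 ↥({v | deg H v = a} ∪ {v | deg H v = b}) | ¬ e.IsDiag}.ncard := by
  refine two_mul_ncard_edgeSet_induce_of_compl φ ?_
  rw [Set.preimage_union, preimage_setOf_deg_eq_of_compl φ hab,
    preimage_setOf_deg_eq_of_compl φ ((add_comm b a).trans hab), Set.union_comm]

lemma two_mul_ncard_edgeSet_between_degClasses (φ : H ≃g Hᶜ) {a b : ℕ}
    (hab : a + b = Nat.card V - 1) :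
    2 * {e : Sym2 V | e ∈ H.edgeSet ∧
        ∃ x ∈ {v | deg H v = a}, ∃ y ∈ {v | deg H v = b}, e = s(x, y)}.ncard =
      {e ∈ {e : Sym2 V | ∃ x ∈ {v | deg H v = a}, ∃ y ∈ {v | deg H v = b}, e = s(x, y)} |
        ¬ e.IsDiag}.ncard :=
  two_mul_ncard_edgeSet_inter_of_compl φ <| Sym2.preimage_map_pairs φ
    (preimage_setOf_deg_eq_of_compl φ hab)
    (preimage_setOf_deg_eq_of_compl φ ((add_comm b a).trans hab))

end SimpleGraph.Iso

end Counting

theorem two_switch_preserves_slice_edges_general {V : Type*} [Finite V]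
    (G G' : SimpleGraph V) (l : ℕ) (d : Fin l → ℕ) (hd : StrictAnti d)
    (hdeg : ∀ v, ∃ i, deg G v = d i) (hattain : ∀ i, ∃ v, deg G v = d i)
    (hforc : ForciblySC (degMultiset G))
    (i : Fin l)
    (hsw : TwoSwitch G G') :
    (G'.induce ({v | deg G v = d i} ∪ {v | deg G v = d i.rev})).edgeSet.ncard =
      (G.induce ({v | deg G v = d i} ∪ {v | deg G v = d i.rev})).edgeSet.ncard ∧
    {e : Sym2 V | e ∈ G'.edgeSet ∧
        ∃ a ∈ {v | deg G v = d i}, ∃ b ∈ {v | deg G v = d i.rev}, e = s(a, b)}.ncard =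
      {e : Sym2 V | e ∈ G.edgeSet ∧
        ∃ a ∈ {v | deg G v = d i}, ∃ b ∈ {v | deg G v = d i.rev}, e = s(a, b)}.ncard := by
  obtain ⟨φ⟩ := hforc.isSelfCompl
  have hdeg' : deg G' = deg G := funext hsw.deg_eq
  obtain ⟨φ'⟩ := ForciblySC.isSelfCompl (G := G') (degMultiset_congr hsw.deg_eq ▸ hforc)
  have hle : ∀ j, d j ≤ Nat.card V - 1 := fun j =>
    let ⟨v, hv⟩ := hattain j
    hv ▸ deg_le G v
  have hrev : d i.rev = Nat.card V - 1 - d i := by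
    refine hd.apply_rev_eq_sub hle (fun j => ?_) i
    obtain ⟨v, hv⟩ := hattain j
    obtain ⟨k, hk⟩ := hdeg (φ v)
    exact ⟨k, by rw [← hk, Iso.deg_apply_of_compl, hv]⟩
  have hsum : d i + d i.rev = Nat.card V - 1 := by
    have := hle i
    omega
  have hin := Iso.two_mul_ncard_edgeSet_induce_degClasses φ hsum
  have hin' := Iso.two_mul_ncard_edgeSet_induce_degClasses φ' hsum
  have hcross := Iso.two_mul_ncard_edgeSet_between_degClasses φ hsum
  have hcross' := Iso.two_mul_ncard_edgeSet_between_degClasses φ' hsum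
  rw [hdeg'] at hin' hcross'
  omega

/-- Let `G` be a graph with `l` distinct vertex degrees
`d 0 > ... > d (l-1)` whose degree sequence is forcibly self-complementary, and let
`i` be an index (0-based `i`, so 1-based `i + 1`) with `i + 1 ≠ (l+1)/2`, i.e.,
`2 * (i + 1) ≠ l + 1`.  If `G'` is obtained from `G` by a single 2-switch, then `G'`
has the same number of edges inside `V_i ∪ V_{l+1-i}` as `G`, and the same number
of edges between `V_i` and `V_{l+1-i}` as `G`. -/
theorem two_switch_preserves_slice_edges {V : Type*} [Finite V]
    (G G' : SimpleGraph V) (l : ℕ) (d : Fin l → ℕ) (hd : StrictAnti d)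
    (hdeg : ∀ v, ∃ i, deg G v = d i) (hattain : ∀ i, ∃ v, deg G v = d i)
    (hforc : ForciblySC (degMultiset G))
    (i : Fin l) (hi : 2 * ((i : ℕ) + 1) ≠ l + 1)
    (hsw : TwoSwitch G G') :
    (G'.induce ({v | deg G v = d i} ∪ {v | deg G v = d i.rev})).edgeSet.ncard =
      (G.induce ({v | deg G v = d i} ∪ {v | deg G v = d i.rev})).edgeSet.ncard ∧
    {e : Sym2 V | e ∈ G'.edgeSet ∧
        ∃ a ∈ {v | deg G v = d i}, ∃ b ∈ {v | deg G v = d i.rev}, e = s(a, b)}.ncard =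
      {e : Sym2 V | e ∈ G.edgeSet ∧
        ∃ a ∈ {v | deg G v = d i}, ∃ b ∈ {v | deg G v = d i.rev}, e = s(a, b)}.ncard :=
  two_switch_preserves_slice_edges_general G G' l d hd hdeg hattain hforc i hsw
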